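/- arXiv:1802.03049 — 2 statements merged into one kernel-verified Lean document; each statement's English description precedes it below -/
import Mathlib

section
/- Fix ℓ with 1 ≤ ℓ ≤ k and a value l_ℓ ∈ ℤ_q. The number of tuples (l_j)_{j ≠ ℓ} ∈ (ℤ_q)^{k-1} such that the full intersection B_{ℓ, l_ℓ} ∩ ⋂_{j ≠ ℓ} B_{j, l_j} is empty equals q^{k-2}(q - 1) = q^{k-1} - q^{k-2}; that is, each block participates in exactly q^{k-2}(q-1) user groups. -/
lemma sum_split_ne {M : Type*} [AddCommMonoid M] {ι : Type*} [Fintype ι] [DecidableEq ι]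
    (j0 : ι) (f : ι → M) :
    ∑ i, f i = f j0 + ∑ i : {x // x ≠ j0}, f i.1 := by
  rw [← Finset.add_sum_erase _ f (Finset.mem_univ j0)]
  congr 1
  exact (Finset.sum_subtype (p := fun x => x ≠ j0) (Finset.univ.erase j0)
    (fun x => by simp [Finset.mem_erase]) f)

lemma card_ne_subtype {α : Type*} [Fintype α] [DecidableEq α] (a : α) :
    Fintype.card {x : α // x ≠ a} = Fintype.card α - 1 := by
  rw [Fintype.card_subtype_compl, Fintype.card_subtype_eq]

lemma card_linear_eq {q : ℕ} [NeZero q] {ι : Type*} [Fintype ι] [DecidableEq ι]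
    (j0 : ι) (ε : ι → ZMod q) (hε : IsUnit (ε j0)) (b : ZMod q) :
    Nat.card {t : ι → ZMod q // ∑ i, ε i * t i = b} = q ^ (Fintype.card ι - 1) := by
  classical
  obtain ⟨w, hw⟩ := hε
  set v : ({x : ι // x ≠ j0} → ZMod q) → ZMod q :=
    fun r => (w⁻¹ : (ZMod q)ˣ) * (b - ∑ i : {x : ι // x ≠ j0}, ε i.1 * r i) with hv
  have key : ∀ r : {x : ι // x ≠ j0} → ZMod q,
      ∑ i, ε i * (fun i => if h : i = j0 then v r else r ⟨i, h⟩) i = b := by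
    intro r
    rw [sum_split_ne j0]
    have h1 : ∀ i : {x : ι // x ≠ j0},
        ε i.1 * (if h : i.1 = j0 then v r else r ⟨i.1, h⟩) = ε i.1 * r i := by
      intro i; rw [dif_neg i.2]
    have h2 : (fun i => if h : i = j0 then v r else r ⟨i, h⟩) j0 = v r := by simp
    rw [Finset.sum_congr rfl (fun i _ => h1 i), h2, hv]
    dsimp only
    rw [← hw, Units.mul_inv_cancel_left]
    ring
  have e : {t : ι → ZMod q // ∑ i, ε i * t i = b} ≃ ({x : ι // x ≠ j0} → ZMod q) := {
    toFun := fun t i => t.1 i.1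
    invFun := fun r => ⟨fun i => if h : i = j0 then v r else r ⟨i, h⟩, key r⟩
    left_inv := by
      rintro ⟨t, ht⟩
      ext i
      dsimp only
      split
      · next h =>
        subst h
        have hb : b - ∑ x : {x : ι // x ≠ i}, ε x.1 * t x.1 = ε i * t i := by
          rw [← ht, sum_split_ne i (fun x => ε x * t x)]; ring
        rw [hv]; dsimp only; rw [hb, ← hw, Units.inv_mul_cancel_left]
      · rfl
    right_inv := by
      intro r; funext i; dsimp only; rw [dif_neg i.2] }
  rw [Nat.card_congr e, Nat.card_eq_fintype_card, Fintype.card_fun, ZMod.card,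
    card_ne_subtype]

lemma card_linear_ne {q : ℕ} [NeZero q] {ι : Type*} [Fintype ι] [DecidableEq ι]
    (j0 : ι) (ε : ι → ZMod q) (hε : IsUnit (ε j0)) (b : ZMod q) :
    Nat.card {t : ι → ZMod q // ∑ i, ε i * t i ≠ b} =
      q ^ Fintype.card ι - q ^ (Fintype.card ι - 1) := by
  classical
  have h1 : Fintype.card {t : ι → ZMod q // ∑ i, ε i * t i ≠ b} =
      Fintype.card (ι → ZMod q) - Fintype.card {t : ι → ZMod q // ∑ i, ε i * t i = b} :=
    Fintype.card_subtype_compl _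
  have h2 := card_linear_eq j0 ε hε b
  rw [Nat.card_eq_fintype_card] at h2
  rw [Nat.card_eq_fintype_card, h1, Fintype.card_fun, ZMod.card, h2]


/-- The block `B_{i,l}` of the resolvable design obtained from the `(k, k-1)`
single parity-check code over `ℤ_q`. -/
def spcBlock (q k : ℕ) (i : Fin k) (l : ZMod q) : Set (Fin (k - 1) → ZMod q) :=
  {u | (if h : (i : ℕ) < k - 1 then u ⟨i, h⟩ else ∑ j, u j) = l}

/-- Fix a block `B_{ℓ, l_ℓ}`. The number of tuples `(l_j)_{j ≠ ℓ} ∈ (ℤ_q)^{k-1}`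
such that the full intersection `B_{ℓ, l_ℓ} ∩ ⋂_{j ≠ ℓ} B_{j, l_j}` is empty
(i.e. the number of user groups the block participates in) equals
`q^{k-2} (q - 1) = q^{k-1} - q^{k-2}`. -/
theorem spc_block_num_user_groups (q k : ℕ) (hq : 2 ≤ q) (hk : 2 ≤ k)
    (ℓ : Fin k) (lℓ : ZMod q) :
    Nat.card {t : {j : Fin k // j ≠ ℓ} → ZMod q |
        spcBlock q k ℓ lℓ ∩ ⋂ j, spcBlock q k j.1 (t j) = ∅} =
      q ^ (k - 2) * (q - 1) ∧
    q ^ (k - 2) * (q - 1) = q ^ (k - 1) - q ^ (k - 2) := by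
  obtain ⟨n, rfl⟩ : ∃ n, k = n + 1 := ⟨k - 1, by omega⟩
  have hn : 1 ≤ n := by omega
  haveI : NeZero q := ⟨by omega⟩
  classical
  -- the full tuple of labels determined by t
  set l : ({j : Fin (n+1) // j ≠ ℓ} → ZMod q) → Fin (n+1) → ZMod q :=
    fun t i => if h : i = ℓ then lℓ else t ⟨i, h⟩ with hl
  -- coefficients
  set η : Fin (n+1) → ZMod q := fun i => if i = Fin.last n then 1 else -1 with hη
  -- membership description
  have hmem : ∀ (t : {j : Fin (n+1) // j ≠ ℓ} → ZMod q) (u : Fin n → ZMod q),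
      u ∈ spcBlock q (n+1) ℓ lℓ ∩ ⋂ j, spcBlock q (n+1) j.1 (t j) ↔
      ∀ i : Fin (n+1), (if h : (i : ℕ) < n then u ⟨i, h⟩ else ∑ j, u j) = l t i := by
    intro t u
    simp only [Set.mem_inter_iff, Set.mem_iInter, spcBlock, Set.mem_setOf_eq,
      Nat.add_sub_cancel]
    constructor
    · rintro ⟨h1, h2⟩ i
      by_cases h : i = ℓ
      · subst h; simpa [hl] using h1
      · simpa [hl, h] using h2 ⟨i, h⟩
    · intro h
      exact ⟨by simpa [hl] using h ℓ, fun j => by simpa [hl, j.2] using h j.1⟩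
  -- nonemptiness criterion
  have hne : ∀ t : {j : Fin (n+1) // j ≠ ℓ} → ZMod q,
      (∃ u : Fin n → ZMod q,
        ∀ i : Fin (n+1), (if h : (i : ℕ) < n then u ⟨i, h⟩ else ∑ j, u j) = l t i) ↔
      ∑ j : Fin n, l t j.castSucc = l t (Fin.last n) := by
    intro t
    constructor
    · rintro ⟨u, hu⟩
      have hu' : ∀ j : Fin n, u j = l t j.castSucc := by
        intro j
        have h := hu j.castSucc
        rw [dif_pos (by simpa using j.isLt)] at h
        simpa using h
      have hlast := hu (Fin.last n)
      rw [dif_neg (by simp)] at hlast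
      rw [← hlast]
      exact Finset.sum_congr rfl fun j _ => (hu' j).symm
    · intro h
      refine ⟨fun j => l t j.castSucc, fun i => ?_⟩
      by_cases hi : (i : ℕ) < n
      · rw [dif_pos hi]
        exact congrArg (l t) (Fin.ext rfl)
      · rw [dif_neg hi]
        have hi' : i = Fin.last n := by
          apply Fin.ext; rw [Fin.val_last]; omega
        rw [hi']
        exact h
  -- rewrite criterion as one linear equation in t
  have hcrit : ∀ t : {j : Fin (n+1) // j ≠ ℓ} → ZMod q,
      (∑ j : Fin n, l t j.castSucc = l t (Fin.last n)) ↔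
      ∑ i : {j : Fin (n+1) // j ≠ ℓ}, η i.1 * t i = -(η ℓ * lℓ) := by
    intro t
    have hsum : ∑ i : Fin (n+1), η i * l t i =
        l t (Fin.last n) - ∑ j : Fin n, l t j.castSucc := by
      rw [Fin.sum_univ_castSucc (f := fun i => η i * l t i)]
      have h1 : ∀ j : Fin n, η j.castSucc * l t j.castSucc = -(l t j.castSucc) := by
        intro j
        rw [hη]
        simp [Fin.castSucc_lt_last j |>.ne]
      rw [Finset.sum_congr rfl fun j _ => h1 j, hη]
      simp [Finset.sum_neg_distrib]
      ring
    have hsum2 : ∑ i : Fin (n+1), η i * l t i =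
        η ℓ * lℓ + ∑ i : {j : Fin (n+1) // j ≠ ℓ}, η i.1 * t i := by
      rw [sum_split_ne ℓ (fun i => η i * l t i)]
      congr 1
      · rw [hl]; simp
      · exact Finset.sum_congr rfl fun i _ => by rw [hl]; simp [i.2]
    constructor
    · intro h
      have : ∑ i : Fin (n+1), η i * l t i = 0 := by rw [hsum, h]; ring
      rw [hsum2] at this
      linear_combination this
    · intro h
      have : ∑ i : Fin (n+1), η i * l t i = 0 := by rw [hsum2, h]; ring
      rw [hsum] at this
      linear_combination -this
  -- set equality
  have hset : {t : {j : Fin (n+1) // j ≠ ℓ} → ZMod q |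
      spcBlock q (n+1) ℓ lℓ ∩ ⋂ j, spcBlock q (n+1) j.1 (t j) = ∅} =
      {t : {j : Fin (n+1) // j ≠ ℓ} → ZMod q |
        ∑ i : {j : Fin (n+1) // j ≠ ℓ}, η i.1 * t i ≠ -(η ℓ * lℓ)} := by
    ext t
    simp only [Set.mem_setOf_eq]
    rw [← Set.not_nonempty_iff_eq_empty]
    constructor
    · intro h hc
      exact h ((hne t).mpr ((hcrit t).mpr hc) |>.imp fun u hu => (hmem t u).mpr hu)
    · intro h ⟨u, hu⟩
      exact h ((hcrit t).mp ((hne t).mp ⟨u, (hmem t u).mp hu⟩))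
  -- pick a coordinate different from ℓ
  have hι : ∃ j0 : {j : Fin (n+1) // j ≠ ℓ}, True := by
    by_cases h : (ℓ : ℕ) = 0
    · exact ⟨⟨⟨1, by omega⟩, fun hc => by simp [Fin.ext_iff, h] at hc⟩, trivial⟩
    · exact ⟨⟨⟨0, by omega⟩, fun hc => by simp [Fin.ext_iff] at hc; omega⟩, trivial⟩
  obtain ⟨j0, -⟩ := hι
  have hεu : IsUnit (η j0.1) := by
    rw [hη]; dsimp only
    split
    · exact isUnit_one
    · exact isUnit_one.neg
  have hcard : Fintype.card {j : Fin (n+1) // j ≠ ℓ} = n := by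
    rw [card_ne_subtype, Fintype.card_fin]
    omega
  have e1 : n + 1 - 2 = n - 1 := by omega
  have e2 : n + 1 - 1 = n := by omega
  have hnum : q ^ n - q ^ (n - 1) = q ^ (n - 1) * (q - 1) := by
    have h1 : q ^ n = q ^ (n - 1) * q := by
      rw [← pow_succ]
      congr 1
      omega
    rw [h1, Nat.mul_sub, mul_one]
  have hln := card_linear_ne j0 (fun i => η i.1) hεu (-(η ℓ * lℓ))
  rw [hcard] at hln
  refine ⟨?_, by rw [e1, e2, ← hnum]⟩
  rw [hset, e1, ← hnum]
  exact hln
end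

section
/- Fix ℓ with 1 ≤ ℓ ≤ k and a value l_ℓ ∈ ℤ_q. The map that sends each tuple (l_j)_{j ≠ ℓ} ∈ (ℤ_q)^{k-1} satisfying B_{ℓ, l_ℓ} ∩ ⋂_{j ≠ ℓ} B_{j, l_j} = ∅ to the unique point of ⋂_{j ≠ ℓ} B_{j, l_j} is a bijection onto the complement (ℤ_q)^{k-1} \ B_{ℓ, l_ℓ}; consequently, over all user groups containing the block B_{ℓ, l_ℓ}, the server associated with B_{ℓ, l_ℓ} recovers each of the q^{k-1} - q^{k-2} points it is missing exactly once. -/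
def spcG (q k : ℕ) (u : Fin (k - 1) → ZMod q) (i : Fin k) : ZMod q :=
  if h : (i : ℕ) < k - 1 then u ⟨i, h⟩ else ∑ j, u j

def spcF (q k : ℕ) (ℓ : Fin k) (t : {j : Fin k // j ≠ ℓ} → ZMod q)
    (i : Fin (k - 1)) : ZMod q :=
  if h : (⟨i.1, i.2.trans_le (Nat.sub_le k 1)⟩ : Fin k) = ℓ then
    t ⟨⟨k - 1, by have := i.2; omega⟩, fun he => by
        have h1 := congrArg Fin.val he
        have h2 := congrArg Fin.val h
        have h3 := i.2
        simp at h1 h2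
        omega⟩ -
      ∑ j : Fin (k - 1),
        if h' : (⟨j.1, j.2.trans_le (Nat.sub_le k 1)⟩ : Fin k) = ℓ then 0
        else t ⟨⟨j.1, j.2.trans_le (Nat.sub_le k 1)⟩, h'⟩
  else t ⟨⟨i.1, i.2.trans_le (Nat.sub_le k 1)⟩, h⟩

lemma spcFG (q k : ℕ) (ℓ : Fin k) (u : Fin (k - 1) → ZMod q) :
    spcF q k ℓ (fun j => spcG q k u j.1) = u := by
  funext i
  unfold spcF spcG
  split
  · rename_i h
    have hlt : ¬ (k - 1 < k - 1) := lt_irrefl _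
    simp only [hlt, dif_neg, not_false_iff]
    have hiff : ∀ j : Fin (k-1), ((⟨j.1, j.2.trans_le (Nat.sub_le k 1)⟩ : Fin k) = ℓ) ↔ j = i := by
      intro j
      constructor
      · intro hj
        have := congrArg Fin.val hj
        have := congrArg Fin.val h
        apply Fin.ext
        simp at *
        omega
      · rintro rfl; exact h
    have : ∀ j : Fin (k-1),
        (if h' : (⟨j.1, j.2.trans_le (Nat.sub_le k 1)⟩ : Fin k) = ℓ then (0 : ZMod q)
         else if hj : (j.1 : ℕ) < k - 1 then u ⟨j.1, hj⟩ else ∑ m, u m)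
        = if j = i then 0 else u j := by
      intro j
      by_cases hj : j = i
      · subst hj; rw [dif_pos h, if_pos rfl]
      · rw [dif_neg (fun hc => hj ((hiff j).1 hc)), if_neg hj, dif_pos j.2]
    rw [Finset.sum_congr rfl (fun j _ => this j)]
    have hsum : ∑ j : Fin (k-1), (if j = i then (0:ZMod q) else u j)
        = (∑ j, u j) - u i := by
      rw [eq_sub_iff_add_eq,
        show u i = ∑ j, if j = i then u j else (0 : ZMod q) by simp,
        ← Finset.sum_add_distrib]
      apply Finset.sum_congr rfl
      intro j _
      by_cases hj : j = i <;> simp [hj]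
    rw [hsum]
    ring
  · rename_i h
    exact dif_pos i.2

lemma spcGF (q k : ℕ) (ℓ : Fin k) (t : {j : Fin k // j ≠ ℓ} → ZMod q)
    (j : {j : Fin k // j ≠ ℓ}) : spcG q k (spcF q k ℓ t) j.1 = t j := by
  unfold spcG
  split
  · rename_i h
    unfold spcF
    rw [dif_neg (fun hc => j.2 (Fin.ext (congrArg Fin.val hc)))]
  · rename_i h
    -- j.1.1 = k - 1
    have hj : (j.1 : ℕ) = k - 1 := by have := j.1.2; omega
    -- ℓ ≠ j.1 so ℓ.1 < k - 1
    have hℓ : (ℓ : ℕ) < k - 1 := by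
      have := ℓ.2
      rcases Nat.lt_or_ge (ℓ : ℕ) (k-1) with h' | h'
      · exact h'
      · exfalso; exact j.2 (Fin.ext (by omega))
    set i0 : Fin (k-1) := ⟨ℓ.1, hℓ⟩ with hi0
    have key : ∀ i : Fin (k-1),
        ((⟨i.1, i.2.trans_le (Nat.sub_le k 1)⟩ : Fin k) = ℓ) ↔ i = i0 := by
      intro i
      constructor
      · intro hc; apply Fin.ext; simpa using congrArg Fin.val hc
      · rintro rfl; apply Fin.ext; rfl
    have hsplit : ∑ i : Fin (k-1), spcF q k ℓ t i
        = spcF q k ℓ t i0 + ∑ i ∈ Finset.univ.erase i0, spcF q k ℓ t i := by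
      rw [Finset.add_sum_erase _ _ (Finset.mem_univ i0)]
    rw [hsplit]
    have h1 : spcF q k ℓ t i0 = t ⟨⟨k-1, by omega⟩, fun he => by
          have := congrArg Fin.val he; simp at this; omega⟩ -
        ∑ i ∈ Finset.univ.erase i0,
          (if h' : (⟨i.1, i.2.trans_le (Nat.sub_le k 1)⟩ : Fin k) = ℓ then 0
           else t ⟨⟨i.1, i.2.trans_le (Nat.sub_le k 1)⟩, h'⟩) := by
      unfold spcF
      rw [dif_pos ((key i0).2 rfl)]
      congr 1
      rw [← Finset.add_sum_erase _ _ (Finset.mem_univ i0), dif_pos ((key i0).2 rfl), zero_add]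
    have h2 : ∀ i ∈ Finset.univ.erase i0, spcF q k ℓ t i
        = (if h' : (⟨i.1, i.2.trans_le (Nat.sub_le k 1)⟩ : Fin k) = ℓ then 0
           else t ⟨⟨i.1, i.2.trans_le (Nat.sub_le k 1)⟩, h'⟩) := by
      intro i hi
      have hne : i ≠ i0 := (Finset.mem_erase.1 hi).1
      unfold spcF
      rw [dif_neg (fun hc => hne ((key i).1 hc)), dif_neg (fun hc => hne ((key i).1 hc))]
    rw [h1, Finset.sum_congr rfl h2]
    have : t ⟨⟨k-1, by omega⟩, fun he => by
          have := congrArg Fin.val he; simp at this; omega⟩ = t j := by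
      congr 1
      apply Subtype.ext
      apply Fin.ext
      simp [hj]
    rw [← this]
    ring

/-- Fix a block `B_{ℓ, l_ℓ}`. The map sending each tuple `(l_j)_{j ≠ ℓ}` with
`B_{ℓ, l_ℓ} ∩ ⋂_{j ≠ ℓ} B_{j, l_j} = ∅` to the unique point of
`⋂_{j ≠ ℓ} B_{j, l_j}` is a bijection onto the complement
`(ℤ_q)^{k-1} \ B_{ℓ, l_ℓ}`: over all user groups containing `B_{ℓ, l_ℓ}`, the
corresponding server recovers each of the `q^{k-1} - q^{k-2}` points it is
missing exactly once. -/
theorem spc_recovery_bijection (q k : ℕ) (hq : 2 ≤ q) (hk : 2 ≤ k)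
    (ℓ : Fin k) (lℓ : ZMod q) :
    ∃ f : ({j : Fin k // j ≠ ℓ} → ZMod q) → (Fin (k - 1) → ZMod q),
      (∀ t ∈ {t : {j : Fin k // j ≠ ℓ} → ZMod q |
          spcBlock q k ℓ lℓ ∩ ⋂ j, spcBlock q k j.1 (t j) = ∅},
        (⋂ j, spcBlock q k j.1 (t j)) = {f t}) ∧
      Set.BijOn f
        {t : {j : Fin k // j ≠ ℓ} → ZMod q |
          spcBlock q k ℓ lℓ ∩ ⋂ j, spcBlock q k j.1 (t j) = ∅}
        (spcBlock q k ℓ lℓ)ᶜ := by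
  classical
  have hsingle : ∀ t : {j : Fin k // j ≠ ℓ} → ZMod q,
      (⋂ j, spcBlock q k j.1 (t j)) = {spcF q k ℓ t} := by
    intro t
    ext u
    simp only [Set.mem_iInter, Set.mem_singleton_iff]
    constructor
    · intro h
      have ht : (fun j : {j : Fin k // j ≠ ℓ} => spcG q k u j.1) = t :=
        funext fun j => (show spcG q k u j.1 = t j from h j)
      rw [← ht, spcFG]
    · rintro rfl j
      exact spcGF q k ℓ t j
  have hmem : ∀ t : {j : Fin k // j ≠ ℓ} → ZMod q,
      (spcBlock q k ℓ lℓ ∩ ⋂ j, spcBlock q k j.1 (t j) = ∅)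
      ↔ spcF q k ℓ t ∈ (spcBlock q k ℓ lℓ)ᶜ := by
    intro t
    rw [hsingle t, Set.inter_singleton_eq_empty]
    exact Iff.rfl
  refine ⟨spcF q k ℓ, fun t _ => hsingle t, fun t ht => (hmem t).1 ht, ?_, ?_⟩
  · intro t1 _ t2 _ he
    funext j
    rw [← spcGF q k ℓ t1 j, ← spcGF q k ℓ t2 j, he]
  · intro u hu
    exact ⟨fun j => spcG q k u j.1,
      (hmem _).2 (by rw [spcFG]; exact hu), spcFG q k ℓ u⟩
end
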